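/- (Copy Lemma) For every triple of jointly distributed random variables (X,Y,Z) taking finitely many values, there exists a quadruple of jointly distributed random variables (A,B,C,C') taking finitely many values such that: the joint distribution of (A,B,C) coincides with that of (X,Y,Z); the joint distribution of (A,C') coincides with that of (X,Z); and I(C'; B,C | A) = 0. -/

import Mathlib

open scoped Classical

/-- Shannon entropy (natural-log base) of a random variable `X` defined on a finite
probability space `(Ω, p)` and taking values in a finite type `α`. -/
noncomputable def ent {Ω α : Type*} [Fintype Ω] [Fintype α] (p : Ω → ℝ) (X : Ω → α) : ℝ :=
  ∑ a : α, Real.negMulLog (∑ ω : Ω, if X ω = a then p ω else 0)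

/-- Probability that the random variable `X` takes the value `a`. -/
noncomputable def distOf {Ω α : Type*} [Fintype Ω] (p : Ω → ℝ) (X : Ω → α) (a : α) : ℝ :=
  ∑ ω : Ω, if X ω = a then p ω else 0

/-!
Glue the laws of `(X, (Y, Z))` and `(X, Z)` along their common marginal, the law of `X`:
`q (x, (y, z), z') = P(x, y, z) · P(x, z') / P(x)`. Then `C'` is a copy of `Z` drawn from the
conditional law of `Z` given `X = A`, independently of `(B, C)`, so both required marginals hold.
Over each `x` the fibre of `q` is a product, on which entropy is additive; summing over `x`
gives `H(C', B, C, A) = H(B, C, A) + H(C', A) - H(A)`, i.e. `I(C'; B, C | A) = 0`.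
The sample space `Fin m` is an enumeration of `𝒳 × (𝒴 × 𝒵) × 𝒵`.
-/

open Finset Function Real

section Distribution

variable {Ω Ω' α β : Type*} [Fintype Ω] [Fintype Ω']

lemma ent_eq_sum_negMulLog_distOf [Fintype α] (p : Ω → ℝ) (X : Ω → α) :
    ent p X = ∑ a, negMulLog (distOf p X a) := rfl

lemma distOf_nonneg {p : Ω → ℝ} (hp : ∀ ω, 0 ≤ p ω) (X : Ω → α) (a : α) :
    0 ≤ distOf p X a :=
  sum_nonneg fun ω _ => by split_ifs <;> simp [hp ω]

lemma sum_distOf [Fintype α] (p : Ω → ℝ) (X : Ω → α) : ∑ a, distOf p X a = ∑ ω, p ω := by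
  simp only [distOf]
  rw [sum_comm]
  simp

lemma sum_distOf_mk [Fintype β] (p : Ω → ℝ) (X : Ω → α) (Y : Ω → β) (a : α) :
    ∑ b, distOf p (fun ω => (X ω, Y ω)) (a, b) = distOf p X a := by
  simp only [distOf]
  rw [sum_comm]
  refine sum_congr rfl fun ω _ => ?_
  by_cases h : X ω = a <;> simp [h, Prod.ext_iff]

lemma distOf_id (p : Ω → ℝ) (ω : Ω) : distOf p id ω = p ω := by
  simp [distOf]

lemma distOf_comp_equiv (e : Ω' ≃ Ω) (p : Ω → ℝ) (X : Ω → α) (a : α) :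
    distOf (p ∘ e) (X ∘ e) a = distOf p X a :=
  e.sum_comp fun ω => if X ω = a then p ω else 0

lemma distOf_comp_of_injective {f : α → β} (hf : Injective f) (p : Ω → ℝ) (X : Ω → α)
    (a : α) : distOf p (f ∘ X) (f a) = distOf p X a := by
  simp only [distOf, comp_apply, hf.eq_iff]

lemma distOf_eq_zero_of_notMem_range (p : Ω → ℝ) {X : Ω → α} {a : α}
    (ha : a ∉ Set.range X) : distOf p X a = 0 :=
  sum_eq_zero fun ω _ => if_neg fun h => ha ⟨ω, h⟩

lemma ent_comp_equiv [Fintype α] (e : Ω' ≃ Ω) (p : Ω → ℝ) (X : Ω → α) :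
    ent (p ∘ e) (X ∘ e) = ent p X := by
  simp only [ent_eq_sum_negMulLog_distOf, distOf_comp_equiv]

lemma ent_comp_of_injective [Fintype α] [Fintype β] {f : α → β} (hf : Injective f)
    (p : Ω → ℝ) (X : Ω → α) : ent p (f ∘ X) = ent p X := by
  simp only [ent_eq_sum_negMulLog_distOf]
  refine (Fintype.sum_of_injective f hf _ _ (fun b hb => ?_)
    fun a => by rw [distOf_comp_of_injective hf]).symm
  rw [distOf_eq_zero_of_notMem_range, negMulLog_zero]
  rintro ⟨ω, rfl⟩
  exact hb ⟨X ω, rfl⟩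

lemma ent_comp_equiv_of_injective [Fintype α] [Fintype β] (e : Ω' ≃ Ω) {f : α → β}
    (hf : Injective f) (p : Ω → ℝ) (X : Ω → α) : ent (p ∘ e) (f ∘ X ∘ e) = ent p X :=
  (ent_comp_equiv e p (f ∘ X)).trans (ent_comp_of_injective hf p X)

end Distribution

section Triple

variable {α β γ : Type*} [Fintype α] [Fintype β] [Fintype γ]

lemma distOf_proj12 (q : α × β × γ → ℝ) (a : α) (b : β) :
    distOf q (fun w => (w.1, w.2.1)) (a, b) = ∑ c, q (a, b, c) := by
  simp only [distOf, Prod.ext_iff, ite_and, Fintype.sum_prod_type, sum_ite_irrel,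
    sum_const_zero, sum_ite_eq', mem_univ, ↓reduceIte]
  rw [sum_comm]
  simp

lemma distOf_proj13 (q : α × β × γ → ℝ) (a : α) (c : γ) :
    distOf q (fun w => (w.1, w.2.2)) (a, c) = ∑ b, q (a, b, c) := by
  simp [distOf, Fintype.sum_prod_type, Prod.ext_iff, ite_and, sum_ite_irrel]

end Triple

lemma sum_sum_negMulLog_mul_div {β γ : Type*} [Fintype β] [Fintype γ] {u : β → ℝ}
    {v : γ → ℝ} (hu : ∀ b, 0 ≤ u b) (hv : ∀ c, 0 ≤ v c) (huv : ∑ c, v c = ∑ b, u b) :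
    ∑ b, ∑ c, negMulLog (u b * v c / ∑ b, u b)
      = ∑ b, negMulLog (u b) + ∑ c, negMulLog (v c) - negMulLog (∑ b, u b) := by
  set t := ∑ b, u b with ht
  rcases eq_or_ne t 0 with h0 | h0
  · have hu0 : u = 0 := (Fintype.sum_eq_zero_iff_of_nonneg hu).mp h0
    have hv0 : v = 0 := (Fintype.sum_eq_zero_iff_of_nonneg hv).mp (huv.trans h0)
    simp [hu0, hv0, h0]
  · have hinv : negMulLog t⁻¹ = t⁻¹ * log t := by simp [negMulLog, log_inv]
    simp only [div_eq_mul_inv, negMulLog_mul, sum_add_distrib, ← mul_sum, ← sum_mul, huv,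
      hinv, ← ht]
    field_simp
    simp only [negMulLog]
    ring

section Glue

variable {α β γ : Type*} [Fintype β]

-- Where the marginal `∑ b, r (a, b)` vanishes, `x / 0 = 0` makes `glue r s` vanish as well.
noncomputable def glue (r : α × β → ℝ) (s : α × γ → ℝ) (w : α × β × γ) : ℝ :=
  r (w.1, w.2.1) * s (w.1, w.2.2) / ∑ b, r (w.1, b)

variable {r : α × β → ℝ} {s : α × γ → ℝ}

lemma glue_nonneg (hr : ∀ x, 0 ≤ r x) (hs : ∀ x, 0 ≤ s x) (w : α × β × γ) :
    0 ≤ glue r s w :=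
  div_nonneg (mul_nonneg (hr _) (hs _)) (sum_nonneg fun _ _ => hr _)

variable [Fintype γ]

lemma sum_glue_right (hr : ∀ x, 0 ≤ r x) (hrs : ∀ a, ∑ c, s (a, c) = ∑ b, r (a, b))
    (a : α) (b : β) : ∑ c, glue r s (a, b, c) = r (a, b) := by
  simp only [glue, ← sum_div, ← mul_sum, hrs]
  rcases eq_or_ne (∑ b, r (a, b)) 0 with h0 | h0
  · simp [congrFun ((Fintype.sum_eq_zero_iff_of_nonneg fun b => hr (a, b)).mp h0) b]
  · exact mul_div_cancel_right₀ _ h0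

lemma sum_glue_left (hs : ∀ x, 0 ≤ s x) (hrs : ∀ a, ∑ c, s (a, c) = ∑ b, r (a, b))
    (a : α) (c : γ) : ∑ b, glue r s (a, b, c) = s (a, c) := by
  simp only [glue, ← sum_div, ← sum_mul]
  rcases eq_or_ne (∑ b, r (a, b)) 0 with h0 | h0
  · simp [congrFun ((Fintype.sum_eq_zero_iff_of_nonneg fun c => hs (a, c)).mp ((hrs a).trans h0)) c]
  · exact mul_div_cancel_left₀ _ h0

variable [Fintype α]

lemma sum_glue (hr : ∀ x, 0 ≤ r x) (hrs : ∀ a, ∑ c, s (a, c) = ∑ b, r (a, b)) :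
    ∑ w, glue r s w = ∑ x, r x := by
  simp only [Fintype.sum_prod_type, sum_glue_right hr hrs]

lemma distOf_glue_proj12 (hr : ∀ x, 0 ≤ r x) (hrs : ∀ a, ∑ c, s (a, c) = ∑ b, r (a, b))
    (x : α × β) : distOf (glue r s) (fun w => (w.1, w.2.1)) x = r x := by
  rw [distOf_proj12, sum_glue_right hr hrs]

lemma distOf_glue_proj13 (hs : ∀ x, 0 ≤ s x) (hrs : ∀ a, ∑ c, s (a, c) = ∑ b, r (a, b))
    (x : α × γ) : distOf (glue r s) (fun w => (w.1, w.2.2)) x = s x := by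
  rw [distOf_proj13, sum_glue_left hs hrs]

lemma distOf_glue_fst (hr : ∀ x, 0 ≤ r x) (hrs : ∀ a, ∑ c, s (a, c) = ∑ b, r (a, b))
    (a : α) : distOf (glue r s) Prod.fst a = ∑ b, r (a, b) := by
  rw [← sum_distOf_mk (glue r s) Prod.fst (fun w => w.2.1)]
  exact sum_congr rfl fun b _ => distOf_glue_proj12 hr hrs (a, b)

lemma glue_condMutualInfo_eq_zero (hr : ∀ x, 0 ≤ r x) (hs : ∀ x, 0 ≤ s x)
    (hrs : ∀ a, ∑ c, s (a, c) = ∑ b, r (a, b)) :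
    ent (glue r s) (fun w => (w.1, w.2.2)) + ent (glue r s) (fun w => (w.1, w.2.1))
      - ent (glue r s) id - ent (glue r s) Prod.fst = 0 := by
  simp only [ent_eq_sum_negMulLog_distOf, distOf_glue_proj12 hr hrs, distOf_glue_proj13 hs hrs,
    distOf_id, distOf_glue_fst hr hrs, Fintype.sum_prod_type]
  rw [← sum_add_distrib, ← sum_sub_distrib, ← sum_sub_distrib]
  refine sum_eq_zero fun a _ => ?_
  have := sum_sum_negMulLog_mul_div (fun b => hr (a, b)) (fun c => hs (a, c)) (hrs a)
  simp only [glue]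
  linarith

lemma glue_comp_equiv_condMutualInfo_eq_zero {Ω β₁ β₂ : Type*} [Fintype Ω] [Fintype β₁]
    [Fintype β₂] {r : α × β₁ × β₂ → ℝ} (hr : ∀ x, 0 ≤ r x) (hs : ∀ x, 0 ≤ s x)
    (hrs : ∀ a, ∑ c, s (a, c) = ∑ b, r (a, b)) (e : Ω ≃ α × (β₁ × β₂) × γ) :
    ent (glue r s ∘ e) (fun i => ((e i).2.2, (e i).1))
      + ent (glue r s ∘ e) (fun i => ((e i).2.1.1, (e i).2.1.2, (e i).1))
      - ent (glue r s ∘ e) (fun i => ((e i).2.2, (e i).2.1.1, (e i).2.1.2, (e i).1))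
      - ent (glue r s ∘ e) (fun i => (e i).1) = 0 := by
  have hCA := ent_comp_equiv_of_injective e Prod.swap_injective (glue r s)
    (fun w => (w.1, w.2.2))
  have hBCA := ent_comp_equiv_of_injective e
    (f := fun v : α × β₁ × β₂ => (v.2.1, v.2.2, v.1))
    (LeftInverse.injective (g := fun u => (u.2.2, u.1, u.2.1)) fun _ => rfl) (glue r s)
    (fun w => (w.1, w.2.1))
  have hCBCA := ent_comp_equiv_of_injective e
    (f := fun w : α × (β₁ × β₂) × γ => (w.2.2, w.2.1.1, w.2.1.2, w.1))
    (LeftInverse.injective (g := fun u => (u.2.2.2, (u.2.1, u.2.2.1), u.1)) fun _ => rfl)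
    (glue r s) id
  have hA := ent_comp_equiv e (glue r s) Prod.fst
  have key := glue_condMutualInfo_eq_zero hr hs hrs
  rw [← hCA, ← hBCA, ← hCBCA, ← hA] at key
  exact key

end Glue

/-- **Copy Lemma.** For every triple of jointly distributed random variables `(X,Y,Z)`
taking finitely many values there exists a quadruple `(A,B,C,C')` of jointly distributed
random variables (taking finitely many values) such that `(A,B,C)` has the same joint
distribution as `(X,Y,Z)`, `(A,C')` has the same joint distribution as `(X,Z)`, and
`I(C'; B,C | A) = 0`. -/
theorem copy_lemma
    {Ω 𝒳 𝒴 𝒵 : Type*} [Fintype Ω] [Fintype 𝒳] [Fintype 𝒴] [Fintype 𝒵]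
    (p : Ω → ℝ) (hp0 : ∀ ω, 0 ≤ p ω) (hp1 : ∑ ω, p ω = 1)
    (X : Ω → 𝒳) (Y : Ω → 𝒴) (Z : Ω → 𝒵) :
    ∃ (m : ℕ) (q : Fin m → ℝ), (∀ ω, 0 ≤ q ω) ∧ (∑ ω, q ω = 1) ∧
      ∃ (A : Fin m → 𝒳) (B : Fin m → 𝒴) (C C' : Fin m → 𝒵),
        (∀ v : 𝒳 × 𝒴 × 𝒵,
          distOf q (fun ω => (A ω, B ω, C ω)) v = distOf p (fun ω => (X ω, Y ω, Z ω)) v) ∧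
        (∀ v : 𝒳 × 𝒵,
          distOf q (fun ω => (A ω, C' ω)) v = distOf p (fun ω => (X ω, Z ω)) v) ∧
        ent q (fun ω => (C' ω, A ω)) + ent q (fun ω => (B ω, C ω, A ω))
          - ent q (fun ω => (C' ω, B ω, C ω, A ω)) - ent q A = 0 := by
  set r := distOf p (fun ω => (X ω, Y ω, Z ω))
  set s := distOf p (fun ω => (X ω, Z ω))
  have hr : ∀ x, 0 ≤ r x := distOf_nonneg hp0 _
  have hs : ∀ x, 0 ≤ s x := distOf_nonneg hp0 _
  have hrs : ∀ a, ∑ c, s (a, c) = ∑ b, r (a, b) := fun a => by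
    rw [sum_distOf_mk, sum_distOf_mk]
  let e := (Fintype.equivFin (𝒳 × (𝒴 × 𝒵) × 𝒵)).symm
  refine ⟨_, glue r s ∘ e, fun _ => glue_nonneg hr hs _, ?_, fun i => (e i).1,
    fun i => (e i).2.1.1, fun i => (e i).2.1.2, fun i => (e i).2.2,
    fun v => (distOf_comp_equiv e _ (fun w => (w.1, w.2.1)) v).trans (distOf_glue_proj12 hr hrs v),
    fun v => (distOf_comp_equiv e _ (fun w => (w.1, w.2.2)) v).trans (distOf_glue_proj13 hs hrs v),
    glue_comp_equiv_condMutualInfo_eq_zero hr hs hrs e⟩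
  rw [← hp1, ← sum_distOf p (fun ω => (X ω, Y ω, Z ω)), ← sum_glue hr hrs]
  exact e.sum_comp (glue r s)
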